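/- arXiv:1109.2174 — 4 statements merged into one kernel-verified Lean document; each statement's English description precedes it below -/
import Mathlib

section
/- Let G and H be finite simple graphs. Then γ(G)·γ(H) ≤ 2·γ(G □ H), where G □ H is the Cartesian product of G and H. -/
open SimpleGraph

/-- `D` is a dominating set of `G`: every vertex not in `D` has a neighbor in `D`. -/
def IsDomSet {V : Type*} (G : SimpleGraph V) (D : Finset V) : Prop :=
  ∀ v : V, v ∉ D → ∃ u ∈ D, G.Adj u v

/-- The domination number `γ(G)`: the minimum size of a dominating set of `G`. -/
noncomputable def domNum {V : Type*} [Fintype V] (G : SimpleGraph V) : ℕ :=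
  sInf {k : ℕ | ∃ D : Finset V, IsDomSet G D ∧ D.card = k}

lemma domNum_exists {V : Type*} [Fintype V] (G : SimpleGraph V) :
    ∃ D : Finset V, IsDomSet G D ∧ D.card = domNum G := by
  have hne : {k : ℕ | ∃ D : Finset V, IsDomSet G D ∧ D.card = k}.Nonempty :=
    ⟨(Finset.univ : Finset V).card, Finset.univ,
      fun v hv => absurd (Finset.mem_univ v) hv, rfl⟩
  exact Nat.sInf_mem hne

lemma domNum_le {V : Type*} [Fintype V] (G : SimpleGraph V) {D : Finset V}
    (hD : IsDomSet G D) : domNum G ≤ D.card :=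
  Nat.sInf_le ⟨D, hD, rfl⟩

/-- Clark–Suen: `γ(G)·γ(H) ≤ 2·γ(G □ H)`. -/
theorem domNum_mul_domNum_le_two_mul_domNum_boxProd
    {V W : Type*} [Fintype V] [Fintype W]
    (G : SimpleGraph V) (H : SimpleGraph W) :
    domNum G * domNum H ≤ 2 * domNum (G □ H) := by
  classical
  obtain ⟨D, hD, hDcard⟩ := domNum_exists (G □ H)
  obtain ⟨Dg, hDg, hDgcard⟩ := domNum_exists G
  -- assign to each vertex of `G` a dominator in `Dg`
  have hfex : ∀ v : V, ∃ u, u ∈ Dg ∧ (G.Adj u v ∨ u = v) := by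
    intro v
    by_cases hv : v ∈ Dg
    · exact ⟨v, hv, Or.inr rfl⟩
    · obtain ⟨u, hu, hadj⟩ := hDg v hv
      exact ⟨u, hu, Or.inl hadj⟩
  choose f hf1 hf2 using hfex
  set Du : V → Finset (V × W) := fun u => D.filter (fun p => f p.1 = u) with hDu
  set Tu : V → Finset W := fun u =>
    Finset.univ.filter (fun h => ¬ ∃ p ∈ D, f p.1 = u ∧ (H.Adj p.2 h ∨ p.2 = h)) with hTu
  -- Claim A : for each `u`, the projection of `Du u` together with `Tu u` dominates `H`
  have claimA : ∀ u ∈ Dg, domNum H ≤ (Du u).card + (Tu u).card := by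
    intro u _
    have hS : IsDomSet H (Tu u ∪ (Du u).image Prod.snd) := by
      intro h hh
      have hh1 : h ∉ Tu u := fun hc => hh (Finset.mem_union_left _ hc)
      have hex : ∃ p ∈ D, f p.1 = u ∧ (H.Adj p.2 h ∨ p.2 = h) := by
        by_contra hc
        exact hh1 (by rw [hTu]; exact Finset.mem_filter.mpr ⟨Finset.mem_univ _, hc⟩)
      obtain ⟨p, hpD, hpf, hpadj⟩ := hex
      have hpmem : p.2 ∈ (Du u).image Prod.snd :=
        Finset.mem_image.mpr ⟨p, Finset.mem_filter.mpr ⟨hpD, hpf⟩, rfl⟩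
      rcases hpadj with hadj | heq
      · exact ⟨p.2, Finset.mem_union_right _ hpmem, hadj⟩
      · exact absurd (Finset.mem_union_right _ (heq ▸ hpmem)) hh
    calc domNum H ≤ (Tu u ∪ (Du u).image Prod.snd).card := domNum_le H hS
      _ ≤ (Tu u).card + ((Du u).image Prod.snd).card := Finset.card_union_le _ _
      _ ≤ (Tu u).card + (Du u).card := by
          exact Nat.add_le_add_left Finset.card_image_le _
      _ = (Du u).card + (Tu u).card := Nat.add_comm _ _
  -- Claim B : horizontal counting
  have claimB : ∀ h : W, (Dg.filter (fun u => h ∈ Tu u)).card ≤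
      (D.filter (fun p => p.2 = h)).card := by
    intro h
    set Dh := (D.filter (fun p => p.2 = h)).image Prod.fst with hDh
    set S := Dh ∪ Dg.filter (fun u => h ∉ Tu u) with hSdef
    have hS : IsDomSet G S := by
      intro v hv
      by_cases hcase : h ∈ Tu (f v)
      · have hTprop : ¬ ∃ p ∈ D, f p.1 = f v ∧ (H.Adj p.2 h ∨ p.2 = h) := by
          have hc2 := hcase
          simp only [hTu, Finset.mem_filter] at hc2
          exact hc2.2
        have hvhD : (v, h) ∉ D := fun hc => hTprop ⟨(v, h), hc, rfl, Or.inr rfl⟩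
        obtain ⟨q, hqD, hqadj⟩ := hD (v, h) hvhD
        rw [boxProd_adj] at hqadj
        rcases hqadj with ⟨hadj, heq⟩ | ⟨hadj, heq⟩
        · refine ⟨q.1, Finset.mem_union_left _ ?_, hadj⟩
          exact Finset.mem_image.mpr ⟨q, Finset.mem_filter.mpr ⟨hqD, heq⟩, rfl⟩
        · exact absurd ⟨q, hqD, by rw [heq], Or.inl hadj⟩ hTprop
      · have hfvS : f v ∈ S :=
          Finset.mem_union_right _ (Finset.mem_filter.mpr ⟨hf1 v, hcase⟩)
        rcases hf2 v with hadj | heq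
        · exact ⟨f v, hfvS, hadj⟩
        · exact absurd (heq ▸ hfvS) hv
    have h1 : domNum G ≤ S.card := domNum_le G hS
    have h2 : S.card ≤ Dh.card + (Dg.filter (fun u => h ∉ Tu u)).card :=
      Finset.card_union_le _ _
    have h3 : Dh.card ≤ (D.filter (fun p => p.2 = h)).card := Finset.card_image_le
    have h4 : (Dg.filter (fun u => h ∈ Tu u)).card
        + (Dg.filter (fun u => ¬ h ∈ Tu u)).card = Dg.card :=
      Finset.card_filter_add_card_filter_not _
    omega
  -- summations
  have sumDu : ∑ u ∈ Dg, (Du u).card = D.card :=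
    (Finset.card_eq_sum_card_fiberwise (fun p _ => hf1 p.1)).symm
  have sumfib : ∑ h : W, (D.filter (fun p => p.2 = h)).card = D.card :=
    (Finset.card_eq_sum_card_fiberwise (fun p _ => Finset.mem_univ p.2)).symm
  have swap : ∑ u ∈ Dg, (Tu u).card = ∑ h : W, (Dg.filter (fun u => h ∈ Tu u)).card := by
    have e1 : ∀ u, (Tu u).card = ∑ h : W, if h ∈ Tu u then 1 else 0 := by
      intro u
      rw [Finset.sum_ite_mem, Finset.univ_inter, Finset.sum_const, smul_eq_mul, mul_one]
    have e2 : ∀ h : W, (Dg.filter (fun u => h ∈ Tu u)).card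
        = ∑ u ∈ Dg, if h ∈ Tu u then 1 else 0 := fun h => Finset.card_filter _ _
    simp only [e1, e2]
    exact Finset.sum_comm
  have sumTu : ∑ u ∈ Dg, (Tu u).card ≤ D.card := by
    rw [swap, ← sumfib]
    exact Finset.sum_le_sum fun h _ => claimB h
  calc domNum G * domNum H = ∑ _u ∈ Dg, domNum H := by
        rw [Finset.sum_const, smul_eq_mul, hDgcard]
    _ ≤ ∑ u ∈ Dg, ((Du u).card + (Tu u).card) := Finset.sum_le_sum claimA
    _ = (∑ u ∈ Dg, (Du u).card) + ∑ u ∈ Dg, (Tu u).card := Finset.sum_add_distrib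
    _ ≤ D.card + D.card := by rw [sumDu]; exact Nat.add_le_add_left sumTu _
    _ = 2 * domNum (G □ H) := by rw [hDcard]; ring
end

section
/- Let G and H be finite simple graphs containing no isolated vertices. Then γ_t(G)·γ_t(H) ≤ 2·γ_t(G □ H). -/
open SimpleGraph

/-- `D` is a total dominating set of `G`: every vertex has a neighbor in `D`. -/
def IsTotalDomSet {V : Type*} (G : SimpleGraph V) (D : Finset V) : Prop :=
  ∀ v : V, ∃ u ∈ D, G.Adj u v

/-- The total domination number `γ_t(G)`. -/
noncomputable def totalDomNum {V : Type*} [Fintype V] (G : SimpleGraph V) : ℕ :=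
  sInf {k : ℕ | ∃ D : Finset V, IsTotalDomSet G D ∧ D.card = k}

/-- Ho's theorem: `γ_t(G)·γ_t(H) ≤ 2·γ_t(G □ H)` for graphs without isolated vertices. -/
theorem totalDomNum_mul_totalDomNum_le_two_mul_totalDomNum_boxProd
    {V W : Type*} [Fintype V] [Fintype W]
    (G : SimpleGraph V) (H : SimpleGraph W)
    (hG : ∀ v : V, ∃ u : V, G.Adj u v) (hH : ∀ w : W, ∃ u : W, H.Adj u w) :
    totalDomNum G * totalDomNum H ≤ 2 * totalDomNum (G □ H) := by
  classical
  -- a minimum total dominating set of the product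
  have hDne : {k : ℕ | ∃ D : Finset (V × W), IsTotalDomSet (G □ H) D ∧ D.card = k}.Nonempty := by
    refine ⟨(Finset.univ : Finset (V × W)).card, Finset.univ, ?_, rfl⟩
    intro v
    obtain ⟨u, hu⟩ := hG v.1
    exact ⟨(u, v.2), Finset.mem_univ _, Or.inl ⟨hu, rfl⟩⟩
  obtain ⟨D, hD, hDcard⟩ := Nat.sInf_mem hDne
  -- a minimum total dominating set of G
  have hUne : {k : ℕ | ∃ D : Finset V, IsTotalDomSet G D ∧ D.card = k}.Nonempty := by
    refine ⟨(Finset.univ : Finset V).card, Finset.univ, ?_, rfl⟩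
    intro v
    obtain ⟨u, hu⟩ := hG v
    exact ⟨u, Finset.mem_univ _, hu⟩
  obtain ⟨U, hU, hUcard⟩ := Nat.sInf_mem hUne
  -- choice of a dominator in U for each vertex of G
  choose α hmem hadj using hU
  -- choice of a neighbor for each vertex of H
  choose ν hν using hH
  -- strip projections and "bad" columns
  set P : V → Finset W := fun u => (D.filter (fun d => α d.1 = u)).image Prod.snd with hPdef
  set B : V → Finset W := fun u =>
    Finset.univ.filter (fun h => ∀ h' ∈ P u, ¬ H.Adj h' h) with hBdef
  -- Lemma 1: if h is bad for strip u, every vertex of the strip is horizontally dominated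
  have lem1 : ∀ u : V, ∀ h ∈ B u, ∀ g : V, α g = u →
      ∃ x ∈ D, (x : V × W).2 = h ∧ G.Adj x.1 g := by
    intro u h hh g hg
    obtain ⟨x, hxD, hxadj⟩ := hD (g, h)
    rw [boxProd_adj] at hxadj
    rcases hxadj with ⟨hadj1, h2⟩ | ⟨hadj2, h1⟩
    · exact ⟨x, hxD, h2, hadj1⟩
    · exfalso
      have hx2P : x.2 ∈ P u := by
        refine Finset.mem_image.mpr ⟨x, Finset.mem_filter.mpr ⟨hxD, ?_⟩, rfl⟩
        rw [h1, hg]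
      have hcond := (Finset.mem_filter.mp hh).2
      exact hcond x.2 hx2P hadj2
  -- Lemma 3: per strip, γ_t(H) ≤ |P u| + |B u|
  have lem3 : ∀ u : V, totalDomNum H ≤ (P u).card + (B u).card := by
    intro u
    have hT : IsTotalDomSet H (P u ∪ (B u).image ν) := by
      intro h
      by_cases hh : h ∈ B u
      · exact ⟨ν h, Finset.mem_union_right _ (Finset.mem_image_of_mem ν hh), hν h⟩
      · have hnot : ¬ (∀ h' ∈ P u, ¬ H.Adj h' h) := by
          intro hall
          exact hh (Finset.mem_filter.mpr ⟨Finset.mem_univ _, hall⟩)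
        push_neg at hnot
        obtain ⟨h', hh', hadj'⟩ := hnot
        exact ⟨h', Finset.mem_union_left _ hh', hadj'⟩
    calc totalDomNum H ≤ (P u ∪ (B u).image ν).card := Nat.sInf_le ⟨_, hT, rfl⟩
      _ ≤ (P u).card + ((B u).image ν).card := Finset.card_union_le _ _
      _ ≤ (P u).card + (B u).card :=
          Nat.add_le_add_left Finset.card_image_le _
  -- Lemma 2: for each column h, the number of bad strips is at most |D_h|
  have lem2 : ∀ h : W, (U.filter (fun u => h ∈ B u)).card ≤
      (D.filter (fun d => (d : V × W).2 = h)).card := by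
    intro h
    set S := U.filter (fun u => h ∈ B u) with hSdef
    set Dh := D.filter (fun d => (d : V × W).2 = h) with hDhdef
    have hE : IsTotalDomSet G ((U \ S) ∪ Dh.image Prod.fst) := by
      intro g
      by_cases hg : α g ∈ S
      · have hgB : h ∈ B (α g) := (Finset.mem_filter.mp hg).2
        obtain ⟨x, hxD, hx2, hxadj⟩ := lem1 (α g) h hgB g rfl
        refine ⟨x.1, Finset.mem_union_right _
          (Finset.mem_image_of_mem _ (Finset.mem_filter.mpr ⟨hxD, hx2⟩)), hxadj⟩
      · exact ⟨α g, Finset.mem_union_left _ (Finset.mem_sdiff.mpr ⟨hmem g, hg⟩), hadj g⟩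
    have h1 : totalDomNum G ≤ (U \ S).card + Dh.card := by
      calc totalDomNum G ≤ ((U \ S) ∪ Dh.image Prod.fst).card := Nat.sInf_le ⟨_, hE, rfl⟩
        _ ≤ (U \ S).card + (Dh.image Prod.fst).card := Finset.card_union_le _ _
        _ ≤ (U \ S).card + Dh.card :=
            Nat.add_le_add_left Finset.card_image_le _
    have h2 : (U \ S).card = U.card - S.card :=
      Finset.card_sdiff_of_subset (Finset.filter_subset _ _)
    have h3 : S.card ≤ U.card := Finset.card_filter_le _ _
    have h4 : totalDomNum G = U.card := hUcard.symm
    omega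
  -- Σ |P u| ≤ |D|
  have sumP : (∑ u ∈ U, (P u).card) ≤ D.card := by
    have hfib : D.card = ∑ u ∈ U, (D.filter (fun d => α d.1 = u)).card :=
      Finset.card_eq_sum_card_fiberwise (fun d _ => hmem d.1)
    calc ∑ u ∈ U, (P u).card
        ≤ ∑ u ∈ U, (D.filter (fun d => α d.1 = u)).card :=
          Finset.sum_le_sum (fun u _ => Finset.card_image_le)
      _ = D.card := hfib.symm
  -- Σ |B u| ≤ |D|
  have sumB : (∑ u ∈ U, (B u).card) ≤ D.card := by
    have hfib : D.card = ∑ h : W, (D.filter (fun d => (d : V × W).2 = h)).card :=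
      Finset.card_eq_sum_card_fiberwise (fun d _ => Finset.mem_univ d.2)
    calc ∑ u ∈ U, (B u).card
        = ∑ u ∈ U, ∑ h : W, (if h ∈ B u then 1 else 0) := by
          refine Finset.sum_congr rfl (fun u _ => ?_)
          rw [← Finset.card_filter, Finset.filter_univ_mem]
      _ = ∑ h : W, ∑ u ∈ U, (if h ∈ B u then 1 else 0) := Finset.sum_comm
      _ = ∑ h : W, (U.filter (fun u => h ∈ B u)).card := by
          refine Finset.sum_congr rfl (fun h _ => ?_)
          rw [Finset.card_filter]
      _ ≤ ∑ h : W, (D.filter (fun d => (d : V × W).2 = h)).card :=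
          Finset.sum_le_sum (fun h _ => lem2 h)
      _ = D.card := hfib.symm
  -- conclusion
  calc totalDomNum G * totalDomNum H
      = ∑ _u ∈ U, totalDomNum H := by
        rw [Finset.sum_const, smul_eq_mul, show U.card = totalDomNum G from hUcard]
    _ ≤ ∑ u ∈ U, ((P u).card + (B u).card) := Finset.sum_le_sum (fun u _ => lem3 u)
    _ = (∑ u ∈ U, (P u).card) + ∑ u ∈ U, (B u).card := Finset.sum_add_distrib
    _ ≤ D.card + D.card := add_le_add sumP sumB
    _ = 2 * totalDomNum (G □ H) := by
        rw [show totalDomNum (G □ H) = D.card from hDcard.symm]; ring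
end

section
/- Let n ≥ 1 and let A^1, A^2, …, A^n be finite simple graphs containing no isolated vertices. Then the product γ_t(A^1)·γ_t(A^2)···γ_t(A^n) is at most n·γ_t(A^1 □ A^2 □ ⋯ □ A^n). -/
open SimpleGraph

/-- The `n`-fold Cartesian (box) product `A^1 □ A^2 □ ⋯ □ A^n` of a family of graphs:
vertices `u` and `v` are adjacent iff there is an index `i` with `(u i, v i)` an edge
of `A i` and `u j = v j` for all `j ≠ i`. -/
def boxProdPi {n : ℕ} {V : Fin n → Type*} (A : ∀ i, SimpleGraph (V i)) :
    SimpleGraph (∀ i, V i) where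
  Adj u v := ∃ i, (A i).Adj (u i) (v i) ∧ ∀ j, j ≠ i → u j = v j
  symm := by
    constructor
    rintro u v ⟨i, hadj, heq⟩
    exact ⟨i, hadj.symm, fun j hj => (heq j hj).symm⟩
  loopless := by
    constructor
    rintro u ⟨i, hadj, -⟩
    exact (A i).irrefl hadj

/-!
Strengthen the claim to an arbitrary vertex set `S` of the product: `∏ γ_t(Aⁱ) ≤ n·|S| + u(S)`,
where `u(S)` counts the vertices with no neighbour in `S`; at a minimum total dominating set this
is the theorem. Split off one factor `G` and send each vertex `w` of `G` to a neighbour `ℓ w` in a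
minimum total dominating set `U` of `G`. The slab of `S` over each cell `ℓ⁻¹(u)`, projected to
the remaining factor `H`, satisfies the bound there, and summing over the `γ_t(G)` cells leaves
the vertices of `H` undominated by the slabs to pay for. Fix such a vertex `h` and let `Q` be the
column of `S` over `h`. Removing from `U` the cells `u` whose slab misses `h`, and adding `Q`
together with `ℓ w` for every vertex `w` of such a cell missed by `Q`, still totally dominates
`G`; each such `(w, h)` is undominated by `S` in `G □ H`. So these cells cost at most
`|Q| + #{w | (w, h) undominated}`, and summing over `h` gives `|S| + u(S)`.
-/

open Finset

section

variable {V W : Type*} [Fintype V] [Fintype W]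

lemma totalDomNum_le_card {G : SimpleGraph V} {D : Finset V} (hD : IsTotalDomSet G D) :
    totalDomNum G ≤ #D :=
  Nat.sInf_le ⟨D, hD, rfl⟩

lemma exists_isTotalDomSet_card_eq (G : SimpleGraph V) (hG : ∀ v, ∃ u, G.Adj u v) :
    ∃ D : Finset V, IsTotalDomSet G D ∧ #D = totalDomNum G :=
  Nat.sInf_mem (s := {k | ∃ D : Finset V, IsTotalDomSet G D ∧ #D = k})
    ⟨_, univ, fun v => (hG v).imp fun _ hu => ⟨mem_univ _, hu⟩, rfl⟩

open Classical in
noncomputable def undominated (G : SimpleGraph V) (S : Finset V) : Finset V :=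
  {v | ¬∃ u ∈ S, G.Adj u v}

@[simp]
lemma mem_undominated {G : SimpleGraph V} {S : Finset V} {v : V} :
    v ∈ undominated G S ↔ ¬∃ u ∈ S, G.Adj u v := by
  simp [undominated]

lemma IsTotalDomSet.undominated_eq_empty {G : SimpleGraph V} {D : Finset V}
    (hD : IsTotalDomSet G D) : undominated G D = ∅ :=
  eq_empty_of_forall_notMem fun v hv => mem_undominated.mp hv (hD v)

lemma card_filter_le_card_add_card_undominated {G : SimpleGraph V} {U : Finset V}
    (hU : #U = totalDomNum G) {ℓ : V → V} (hℓU : ∀ w, ℓ w ∈ U) (hℓ : ∀ w, G.Adj (ℓ w) w)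
    (p : V → Prop) [DecidablePred p] (Q : Finset V) :
    #{u ∈ U | p u} ≤ #Q + #{w ∈ undominated G Q | p (ℓ w)} := by
  classical
  set B := {w ∈ undominated G Q | p (ℓ w)}
  have hD : IsTotalDomSet G (Q ∪ {u ∈ U | ¬p u} ∪ B.image ℓ) := by
    intro w
    by_cases hw : p (ℓ w)
    · by_cases hQ : ∃ q ∈ Q, G.Adj q w
      · obtain ⟨q, hq, hqw⟩ := hQ
        exact ⟨q, by simp [hq], hqw⟩
      · exact ⟨ℓ w, mem_union_right _ (mem_image_of_mem ℓ (by simp [B, hQ, hw])), hℓ w⟩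
    · exact ⟨ℓ w, by simp [hℓU w, hw], hℓ w⟩
  have hsplit := card_filter_add_card_filter_not (s := U) (fun u => p u)
  have := (totalDomNum_le_card hD).trans <|
    (card_union_le _ _).trans (add_le_add (card_union_le _ _) card_image_le)
  omega

lemma sum_card_image_filter_le {α β γ : Type*} [DecidableEq β] [DecidableEq γ]
    (s : Finset α) (t : Finset β) (f : α → β) (g : α → γ) :
    ∑ b ∈ t, #({a ∈ s | f a = b}.image g) ≤ #s :=
  calc ∑ b ∈ t, #({a ∈ s | f a = b}.image g)
      ≤ ∑ b ∈ t, #{a ∈ s | f a = b} := sum_le_sum fun _ _ => card_image_le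
    _ = #{a ∈ s | f a ∈ t} := sum_card_fiberwise_eq_card_filter s t f
    _ ≤ #s := card_filter_le s _

lemma totalDomNum_mul_le_mul_card_add_card_undominated_boxProd
    {G : SimpleGraph V} {H : SimpleGraph W} (hG : ∀ v, ∃ u, G.Adj u v) {c k : ℕ}
    (hH : ∀ T : Finset W, c ≤ k * #T + #(undominated H T))
    (S : Finset (V × W)) :
    totalDomNum G * c ≤ (k + 1) * #S + #(undominated (G □ H) S) := by
  classical
  obtain ⟨U, hUdom, hU⟩ := exists_isTotalDomSet_card_eq G hG
  choose ℓ hℓU hℓ using hUdom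
  set slab : V → Finset W := fun u => {x ∈ S | ℓ x.1 = u}.image Prod.snd
  set column : W → Finset V := fun h => {x ∈ S | x.2 = h}.image Prod.fst
  have hmissed (h : W) :
      #{w ∈ undominated G (column h) | h ∈ undominated H (slab (ℓ w))} ≤
        #{x ∈ undominated (G □ H) S | x.2 = h} := by
    refine card_le_card_of_injOn (fun w => (w, h)) (fun w hw => ?_)
      fun _ _ _ _ => congrArg Prod.fst
    simp only [coe_filter, mem_undominated] at hw
    refine mem_filter.mpr ⟨mem_undominated.mpr ?_, rfl⟩
    rintro ⟨x, hxS, ⟨hx, rfl⟩ | ⟨hx, rfl⟩⟩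
    · exact hw.1 ⟨x.1, mem_image_of_mem _ (by simp [hxS]), hx⟩
    · exact hw.2 ⟨x.2, mem_image_of_mem _ (by simp [hxS]), hx⟩
  have hcount : ∑ u ∈ U, #(undominated H (slab u)) ≤ #S + #(undominated (G □ H) S) :=
    calc ∑ u ∈ U, #(undominated H (slab u))
        = ∑ h, #{u ∈ U | h ∈ undominated H (slab u)} := by
          simpa only [bipartiteAbove, bipartiteBelow, filter_mem_eq_inter, univ_inter] using
            sum_card_bipartiteAbove_eq_sum_card_bipartiteBelow (s := U) (t := univ)
              (fun u h => h ∈ undominated H (slab u))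
      _ ≤ ∑ h, (#(column h) + #{x ∈ undominated (G □ H) S | x.2 = h}) :=
          sum_le_sum fun h _ =>
            (card_filter_le_card_add_card_undominated hU hℓU hℓ _ (column h)).trans
              (Nat.add_le_add_left (hmissed h) _)
      _ ≤ #S + #(undominated (G □ H) S) := by
          rw [sum_add_distrib]
          exact add_le_add (sum_card_image_filter_le S univ Prod.snd Prod.fst)
            (card_eq_sum_card_fiberwise fun _ _ => mem_univ _).ge
  calc totalDomNum G * c
      = ∑ _u ∈ U, c := by rw [sum_const, smul_eq_mul, hU]
    _ ≤ ∑ u ∈ U, (k * #(slab u) + #(undominated H (slab u))) := sum_le_sum fun u _ => hH _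
    _ = k * ∑ u ∈ U, #(slab u) + ∑ u ∈ U, #(undominated H (slab u)) := by
        rw [sum_add_distrib, mul_sum]
    _ ≤ k * #S + (#S + #(undominated (G □ H) S)) :=
        add_le_add (Nat.mul_le_mul_left _ (sum_card_image_filter_le S U _ _)) hcount
    _ = (k + 1) * #S + #(undominated (G □ H) S) := by ring

lemma card_undominated_map {V' : Type*} [Fintype V'] {G : SimpleGraph V} {G' : SimpleGraph V'}
    (e : G ≃g G') (S : Finset V) :
    #(undominated G' (S.map e.toEquiv.toEmbedding)) = #(undominated G S) := by
  rw [← card_map e.toEquiv.toEmbedding]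
  congr 1
  ext v'
  obtain ⟨v, rfl⟩ := e.surjective v'
  simp only [mem_undominated, mem_map, Equiv.coe_toEmbedding, RelIso.coe_fn_toEquiv,
    e.injective.eq_iff, exists_eq_right, exists_exists_and_eq_and, e.map_adj_iff]

end

def boxProdPiSuccIso {n : ℕ} {V : Fin (n + 1) → Type*} (A : ∀ i, SimpleGraph (V i)) :
    boxProdPi A ≃g A 0 □ boxProdPi fun i => A i.succ where
  toEquiv := (Fin.consEquiv V).symm
  map_rel_iff' := by
    intro a b
    simp only [boxProdPi, ne_eq, Fin.consEquiv_symm_apply, boxProd_adj, funext_iff, Fin.tail,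
      Fin.forall_fin_succ, Fin.exists_fin_succ, not_true_eq_false, IsEmpty.forall_iff,
      Fin.succ_ne_zero, not_false_eq_true, forall_const, true_and, (Fin.succ_ne_zero _).symm,
      Fin.succ_inj]
    grind

lemma prod_totalDomNum_le_mul_card_add_card_undominated {n : ℕ} {V : Fin n → Type*}
    [∀ i, Fintype (V i)] (A : ∀ i, SimpleGraph (V i)) (hA : ∀ i v, ∃ u, (A i).Adj u v)
    (S : Finset (∀ i, V i)) :
    ∏ i, totalDomNum (A i) ≤ n * #S + #(undominated (boxProdPi A) S) := by
  induction n with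
  | zero =>
    -- the empty product is a single isolated vertex
    have hv : (finZeroElim : ∀ i, V i) ∈ undominated (boxProdPi A) S := by
      simp [boxProdPi]
    simpa using card_pos.mpr ⟨_, hv⟩
  | succ n ih =>
    rw [Fin.prod_univ_succ]
    simpa only [card_map, card_undominated_map] using
      totalDomNum_mul_le_mul_card_add_card_undominated_boxProd (hA 0) (ih _ fun i => hA i.succ)
        (S.map (boxProdPiSuccIso A).toEquiv.toEmbedding)

/-- `γ_t(A^1)·γ_t(A^2)···γ_t(A^n) ≤ n·γ_t(A^1 □ ⋯ □ A^n)` for graphs without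
isolated vertices. -/
theorem prod_totalDomNum_le_mul_totalDomNum_boxProdPi
    {n : ℕ} (hn : 1 ≤ n) {V : Fin n → Type*} [∀ i, Fintype (V i)]
    (A : ∀ i, SimpleGraph (V i))
    (hA : ∀ i, ∀ v : V i, ∃ u : V i, (A i).Adj u v) :
    ∏ i, totalDomNum (A i) ≤ n * totalDomNum (boxProdPi A) := by
  have hbox (v : ∀ i, V i) : ∃ u, (boxProdPi A).Adj u v := by
    obtain ⟨u, hu⟩ := hA ⟨0, hn⟩ (v ⟨0, hn⟩)
    exact ⟨Function.update v ⟨0, hn⟩ u, ⟨0, hn⟩, by simpa using hu,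
      fun j hj => Function.update_of_ne hj _ _⟩
  obtain ⟨D, hD, hDcard⟩ := exists_isTotalDomSet_card_eq _ hbox
  simpa [hD.undominated_eq_empty, hDcard] using
    prod_totalDomNum_le_mul_card_add_card_undominated A hA D
end

section
/- Let G and H be finite simple graphs containing no isolated vertices. Then γ_pr(G)·γ_pr(H) ≤ 6·γ_pr(G □ H). -/
open SimpleGraph

/-- `D` is a paired dominating set of `G`: a dominating set such that the subgraph
of `G` induced by `D` has a perfect matching, i.e. there is a matching subgraph of `G`
whose vertex set is exactly `D`. -/
def IsPairedDomSet {V : Type*} (G : SimpleGraph V) (D : Finset V) : Prop :=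
  IsDomSet G D ∧ ∃ M : G.Subgraph, M.verts = ↑D ∧ M.IsMatching

/-- The paired domination number `γ_pr(G)`. -/
noncomputable def pairedDomNum {V : Type*} [Fintype V] (G : SimpleGraph V) : ℕ :=
  sInf {k : ℕ | ∃ D : Finset V, IsPairedDomSet G D ∧ D.card = k}

/-!
Take a minimum paired dominating set of `G`, let `I` be its set of pairs (so `γ_pr(G) = 2 #I`),
and assign to every vertex of `G` a pair dominating it; this splits `V` into `#I` classes. Take a
minimum paired dominating set `D` of `G □ H`; each of its pairs is horizontal (a `G`-edge) or
vertical (an `H`-edge).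

Both bounds below come from completing pairings: a pairing `C` with `C ∪ Y` dominating extends
greedily to a paired dominating set of size at most `#C + 2 #Y`, and two pairings merge into one
at the cost of their overlap.

Call a class dominated in the layer `V × {w}` if each of its vertices has a `G`-neighbour in that
layer of `D`. In `G`, the layer of `D` together with the pairs of the non-dominated classes
dominates, so `2 #{dominated classes at w} ≤ h_w + 2 v_w`, counting horizontal and vertical vertices
of `D` in the layer. In `H`, for a class `e`, the vertical pairs of `D` over `e` (projected), the
horizontal vertices over `e` and the layers where `e` is dominated form a dominating set, so
`γ_pr(H) ≤ v_e + 2 h_e + 2 #{w | e dominated at w}`. Summing over the classes and inserting the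
first bound summed over the layers gives `#I · γ_pr(H) ≤ 3 #D`.
-/

open Finset

section Pairing

variable {V : Type*} {G : SimpleGraph V}

/-- `g` is the partner map of a perfect matching of `G` on `C`. -/
def IsPairing (G : SimpleGraph V) (C : Finset V) (g : V → V) : Prop :=
  ∀ x ∈ C, g x ∈ C ∧ G.Adj x (g x) ∧ g (g x) = x

theorem IsDomSet.mono {D D' : Finset V} (hD : IsDomSet G D) (h : D ⊆ D') : IsDomSet G D' := by
  intro v hv
  obtain ⟨u, hu, huv⟩ := hD v fun hvD => hv (h hvD)
  exact ⟨u, h hu, huv⟩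

theorem IsDomSet.exists_mem_eq_or_adj {D : Finset V} (hD : IsDomSet G D) (v : V) :
    ∃ u ∈ D, u = v ∨ G.Adj u v := by
  by_cases hv : v ∈ D
  · exact ⟨v, hv, Or.inl rfl⟩
  · obtain ⟨u, hu, huv⟩ := hD v hv
    exact ⟨u, hu, Or.inr huv⟩

theorem IsPairing.filter {C : Finset V} {g : V → V} (hC : IsPairing G C g) (p : V → Prop)
    [DecidablePred p] (hp : ∀ x ∈ C, p x → p (g x)) : IsPairing G (C.filter p) g := by
  intro x hx
  rw [mem_filter] at hx ⊢
  obtain ⟨hgx, hadj, hggx⟩ := hC x hx.1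
  exact ⟨⟨hgx, hp x hx.1 hx.2⟩, hadj, hggx⟩

theorem IsPairing.insert_insert [DecidableEq V] {C : Finset V} {g : V → V} {x y : V}
    (hC : IsPairing G C g) (hx : x ∉ C) (hy : y ∉ C) (hxy : G.Adj x y) :
    IsPairing G (insert x (insert y C))
      (fun z => if z = x then y else if z = y then x else g z) := by
  have hne : ∀ z ∈ C, z ≠ x ∧ z ≠ y := fun z hz =>
    ⟨ne_of_mem_of_not_mem hz hx, ne_of_mem_of_not_mem hz hy⟩
  intro z hz
  rcases mem_insert.1 hz with rfl | hz
  · simp [hxy, hxy.ne.symm]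
  rcases mem_insert.1 hz with rfl | hz
  · simp [hxy.symm, hxy.ne.symm]
  obtain ⟨hgz, hadj, hggz⟩ := hC z hz
  simp [(hne z hz).1, (hne z hz).2, (hne _ hgz).1, (hne _ hgz).2, hgz, hadj, hggz]

theorem isPairedDomSet_iff {D : Finset V} :
    IsPairedDomSet G D ↔ IsDomSet G D ∧ ∃ g, IsPairing G D g := by
  classical
  refine and_congr_right fun _ => ⟨?_, ?_⟩
  · rintro ⟨M, hverts, hM⟩
    have hD : ∀ x ∈ D, ∃! y, M.Adj x y := fun x hx => hM (by rw [hverts]; exact hx)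
    refine ⟨fun x => if hx : x ∈ D then (hD x hx).choose else x, fun x hx => ?_⟩
    have hadj : M.Adj x (hD x hx).choose := (hD x hx).choose_spec.1
    have hy : (hD x hx).choose ∈ D := by
      rw [← mem_coe, ← hverts]; exact M.edge_vert hadj.symm
    simp only [dif_pos hx, dif_pos hy]
    exact ⟨hy, M.adj_sub hadj, ((hD _ hy).choose_spec.2 x hadj.symm).symm⟩
  · rintro ⟨g, hg⟩
    refine ⟨{ verts := D, Adj := fun x y => x ∈ D ∧ y = g x ∨ y ∈ D ∧ x = g y,
              adj_sub := ?_, edge_vert := ?_, symm := ⟨fun x y h => h.symm⟩ }, rfl, ?_⟩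
    · rintro x y (⟨hx, rfl⟩ | ⟨hy, rfl⟩)
      exacts [(hg x hx).2.1, (hg y hy).2.1.symm]
    · rintro x y (⟨hx, rfl⟩ | ⟨hy, rfl⟩)
      exacts [hx, (hg y hy).1]
    · intro x hx
      refine ⟨g x, Or.inl ⟨hx, rfl⟩, ?_⟩
      rintro y (⟨-, rfl⟩ | ⟨hy, rfl⟩)
      exacts [rfl, ((hg y hy).2.2).symm]

theorem pairedDomNum_le_card [Fintype V] {D : Finset V} (hD : IsPairedDomSet G D) :
    pairedDomNum G ≤ #D :=
  Nat.sInf_le ⟨D, hD, rfl⟩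

/-- Greedy completion: pair up unpaired vertices of `Y` with unpaired neighbours while possible;
when no such edge remains, the paired vertices dominate. -/
theorem IsPairing.exists_isPairedDomSet_card_le [DecidableEq V] (hG : ∀ v, ∃ u, G.Adj u v)
    {C Y : Finset V} {g : V → V} (hC : IsPairing G C g) (hdom : IsDomSet G (C ∪ Y)) :
    ∃ P, IsPairedDomSet G P ∧ #P ≤ #C + 2 * #Y := by
  induction Y using Finset.strongInduction generalizing C g with
  | H Y ih =>
  by_cases hedge : ∃ x ∈ Y, x ∉ C ∧ ∃ y ∉ C, G.Adj x y
  · obtain ⟨x, hxY, hxC, y, hyC, hxy⟩ := hedge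
    obtain ⟨P, hP, hcard⟩ := ih (Y.erase x) (erase_ssubset hxY)
      (hC.insert_insert hxC hyC hxy)
      (hdom.mono fun z => by simp only [mem_union, mem_insert, mem_erase]; tauto)
    refine ⟨P, hP, hcard.trans ?_⟩
    have := card_insert_le x (insert y C)
    have := card_insert_le y C
    have := card_erase_add_one hxY
    omega
  · push Not at hedge
    refine ⟨C, isPairedDomSet_iff.2 ⟨fun v hvC => ?_, g, hC⟩, Nat.le_add_right _ _⟩
    by_cases hvY : v ∈ Y
    · obtain ⟨u, hu⟩ := hG v
      exact ⟨u, by_contra fun huC => hedge v hvY hvC u huC hu.symm, hu⟩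
    · obtain ⟨u, hu, huv⟩ := hdom v (by simp [hvC, hvY])
      refine ⟨u, ?_, huv⟩
      by_contra huC
      exact hedge u ((mem_union.1 hu).resolve_left huC) huC v hvC huv

theorem isPairing_empty (g : V → V) : IsPairing G ∅ g := fun x hx => absurd hx (notMem_empty x)

/-- Keep all pairs of `A` and those pairs of `B` disjoint from `A`; a vertex of `B \ A` that
loses its partner is charged to that partner, which lies in `A ∩ B`. -/
theorem IsPairing.exists_merge [DecidableEq V] {A B : Finset V} {a b : V → V}
    (hA : IsPairing G A a) (hB : IsPairing G B b) :
    ∃ C c, IsPairing G C c ∧ #C + 2 * #((A ∪ B) \ C) ≤ #A + #B := by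
  set F := {z ∈ B \ A | b z ∉ A}
  set L := {z ∈ B \ A | b z ∈ A}
  have hF : ∀ z ∈ F, b z ∈ F ∧ G.Adj z (b z) ∧ b (b z) = z := by
    intro z hz
    simp only [F, mem_filter, mem_sdiff] at hz ⊢
    obtain ⟨hbz, hadj, hbbz⟩ := hB z hz.1.1
    exact ⟨⟨⟨hbz, hz.2⟩, by rw [hbbz]; exact hz.1.2⟩, hadj, hbbz⟩
  refine ⟨A ∪ F, fun z => if z ∈ A then a z else b z, ?_, ?_⟩
  · intro z hz
    rcases mem_union.1 hz with hzA | hzF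
    · obtain ⟨haz, hadj, haaz⟩ := hA z hzA
      simp [hzA, haz, hadj, haaz]
    · have hzA : z ∉ A := (mem_sdiff.1 (mem_filter.1 hzF).1).2
      have hbzA : b z ∉ A := (mem_filter.1 hzF).2
      obtain ⟨hbz, hadj, hbbz⟩ := hF z hzF
      simp [hzA, hbzA, hbz, hadj, hbbz]
  · have hsub : (A ∪ B) \ (A ∪ F) ⊆ L := by
      intro z hz
      simp only [F, L, mem_sdiff, mem_union, mem_filter] at hz ⊢
      tauto
    have hL : #L ≤ #(B ∩ A) := by
      refine card_le_card_of_injOn b (fun z hz => ?_) (fun z hz z' hz' h => ?_)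
      · rw [mem_coe, mem_filter, mem_sdiff] at hz
        exact mem_inter.2 ⟨(hB z hz.1.1).1, hz.2⟩
      · rw [mem_coe, mem_filter, mem_sdiff] at hz hz'
        rw [← (hB z hz.1.1).2.2, ← (hB z' hz'.1.1).2.2, h]
    have hLF : #L + #F = #(B \ A) := card_filter_add_card_filter_not _
    have hAF : #(A ∪ F) = #A + #F :=
      card_union_of_disjoint <| disjoint_left.2 fun z hzA hzF =>
        (mem_sdiff.1 (mem_filter.1 hzF).1).2 hzA
    have := card_le_card hsub
    have := card_sdiff_add_card_inter B A
    omega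

theorem exists_isPairing_biUnion [DecidableEq V] {ι : Type*} (s : Finset ι) {A : ι → Finset V}
    {a : ι → V → V} (h : ∀ i ∈ s, IsPairing G (A i) (a i)) :
    ∃ C c, IsPairing G C c ∧ #C + 2 * #(s.biUnion A \ C) ≤ ∑ i ∈ s, #(A i) := by
  classical
  induction s using Finset.induction_on with
  | empty => exact ⟨∅, id, isPairing_empty id, by simp⟩
  | insert i s hi ih =>
    obtain ⟨C, c, hC, hcard⟩ := ih fun j hj => h j (mem_insert_of_mem hj)
    obtain ⟨C', c', hC', hcard'⟩ := hC.exists_merge (h i (mem_insert_self i s))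
    refine ⟨C', c', hC', ?_⟩
    have hsub : (insert i s).biUnion A \ C' ⊆ (s.biUnion A \ C) ∪ ((C ∪ A i) \ C') := by
      intro z
      simp only [biUnion_insert, mem_sdiff, mem_union]
      tauto
    have := (card_le_card hsub).trans (card_union_le _ _)
    rw [sum_insert hi]
    omega

theorem IsPairing.pairedDomNum_le [Fintype V] [DecidableEq V] (hG : ∀ v, ∃ u, G.Adj u v)
    {C U Y : Finset V} {c : V → V} (hC : IsPairing G C c) (hdom : IsDomSet G (U ∪ Y)) :
    pairedDomNum G ≤ #C + 2 * #(U \ C) + 2 * #Y := by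
  obtain ⟨P, hP, hcard⟩ := hC.exists_isPairedDomSet_card_le hG
    (hdom.mono (D' := C ∪ (U \ C ∪ Y)) fun z => by simp only [mem_union, mem_sdiff]; tauto)
  have := card_union_le (U \ C) Y
  exact (pairedDomNum_le_card hP).trans (by omega)

theorem pairedDomNum_le_card_add_card_add_two_mul_card [Fintype V] [DecidableEq V]
    (hG : ∀ v, ∃ u, G.Adj u v) {A B Y : Finset V} {a b : V → V} (hA : IsPairing G A a)
    (hB : IsPairing G B b) (hdom : IsDomSet G (A ∪ B ∪ Y)) :
    pairedDomNum G ≤ #A + #B + 2 * #Y := by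
  obtain ⟨C, c, hC, hcard⟩ := hA.exists_merge hB
  exact (hC.pairedDomNum_le hG hdom).trans (by omega)

theorem pairedDomNum_le_sum_card_add_two_mul_card [Fintype V] [DecidableEq V]
    (hG : ∀ v, ∃ u, G.Adj u v) {ι : Type*} {s : Finset ι} {A : ι → Finset V} {a : ι → V → V}
    {Y : Finset V} (h : ∀ i ∈ s, IsPairing G (A i) (a i)) (hdom : IsDomSet G (s.biUnion A ∪ Y)) :
    pairedDomNum G ≤ ∑ i ∈ s, #(A i) + 2 * #Y := by
  obtain ⟨C, c, hC, hcard⟩ := exists_isPairing_biUnion s h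
  exact (hC.pairedDomNum_le hG hdom).trans (by omega)

theorem exists_isPairedDomSet_card_eq_pairedDomNum [Fintype V] (hG : ∀ v, ∃ u, G.Adj u v) :
    ∃ D, IsPairedDomSet G D ∧ #D = pairedDomNum G := by
  classical
  obtain ⟨P, hP, -⟩ := (isPairing_empty id).exists_isPairedDomSet_card_le (Y := univ) hG
    fun v hv => absurd (mem_union_right _ (mem_univ v)) hv
  exact Nat.sInf_mem (s := {k | ∃ D, IsPairedDomSet G D ∧ #D = k}) ⟨_, P, hP, rfl⟩

theorem IsPairing.card_filter_sym2_mem [DecidableEq V] {C : Finset V} {g : V → V}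
    (hC : IsPairing G C g) {S : Finset (Sym2 V)} (hS : S ⊆ C.image fun u => s(u, g u)) :
    #{u ∈ C | s(u, g u) ∈ S} = 2 * #S := by
  rw [card_eq_sum_card_fiberwise (s := {u ∈ C | s(u, g u) ∈ S}) (t := S)
    fun u hu => (mem_filter.1 hu).2, mul_comm, ← smul_eq_mul, ← sum_const]
  refine sum_congr rfl fun e he => ?_
  obtain ⟨a, ha, rfl⟩ := mem_image.1 (hS he)
  obtain ⟨hga, hadj, hgga⟩ := hC a ha
  have : {x ∈ {u ∈ C | s(u, g u) ∈ S} | s(x, g x) = s(a, g a)} = {a, g a} := by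
    ext x
    simp only [mem_filter, mem_insert, mem_singleton]
    constructor
    · rintro ⟨-, hx⟩
      rcases Sym2.eq_iff.1 hx with ⟨rfl, -⟩ | ⟨rfl, -⟩ <;> simp
    · rintro (rfl | rfl)
      · exact ⟨⟨ha, he⟩, rfl⟩
      · rw [hgga, Sym2.eq_swap]
        exact ⟨⟨hga, he⟩, rfl⟩
  rw [this, card_pair hadj.ne]

end Pairing

section BoxProd

open Classical

variable {V W κ : Type*} {G : SimpleGraph V} {H : SimpleGraph W}

noncomputable def gLayer [Fintype V] (S : Finset (V × W)) (w : W) : Finset V :=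
  {v | (v, w) ∈ S}

noncomputable def hLayer [Fintype W] (S : Finset (V × W)) (v : V) : Finset W :=
  {w | (v, w) ∈ S}

theorem sum_card_gLayer [Fintype V] [Fintype W] (S : Finset (V × W)) :
    ∑ w, #(gLayer S w) = #S := by
  rw [card_eq_sum_card_fiberwise (f := Prod.snd) (t := univ) fun _ _ => mem_univ _]
  refine sum_congr rfl fun w _ => card_nbij' (fun v => (v, w)) Prod.fst ?_ ?_ ?_ ?_ <;>
    simp +contextual [gLayer, Set.MapsTo, Set.LeftInvOn, eq_comm]

theorem sum_card_hLayer [Fintype V] [Fintype W] (S : Finset (V × W)) :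
    ∑ v, #(hLayer S v) = #S := by
  rw [card_eq_sum_card_fiberwise (f := Prod.fst) (t := univ) fun _ _ => mem_univ _]
  refine sum_congr rfl fun v _ => card_nbij' (fun w => (v, w)) Prod.snd ?_ ?_ ?_ ?_ <;>
    simp +contextual [hLayer, Set.MapsTo, Set.LeftInvOn, eq_comm]

theorem IsPairing.gLayer [Fintype V] {S : Finset (V × W)} {f : V × W → V × W}
    (hS : IsPairing (G □ H) S f) (hhor : ∀ d ∈ S, (f d).2 = d.2) (w : W) :
    IsPairing G (gLayer S w) fun v => (f (v, w)).1 := by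
  intro v hv
  rw [_root_.gLayer, mem_filter] at hv
  obtain ⟨hfS, hadj, hff⟩ := hS _ hv.2
  have hfw : f (v, w) = ((f (v, w)).1, w) := Prod.ext rfl (hhor _ hv.2)
  rw [hfw] at hfS hadj hff
  simp only [_root_.gLayer, mem_filter, mem_univ, true_and, hfS, hff]
  exact ⟨boxProd_adj_left.1 hadj, trivial⟩

theorem IsPairing.fst_eq_of_snd_ne {D : Finset (V × W)} {f : V × W → V × W}
    (hf : IsPairing (G □ H) D f) {d : V × W} (hd : d ∈ D) (h : (f d).2 ≠ d.2) : (f d).1 = d.1 :=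
  ((boxProd_adj.1 (hf d hd).2.1).resolve_left fun h' => h h'.2.symm).2.symm

theorem IsPairing.hLayer [Fintype W] {S : Finset (V × W)} {f : V × W → V × W}
    (hS : IsPairing (G □ H) S f) (hver : ∀ d ∈ S, (f d).2 ≠ d.2) (v : V) :
    IsPairing H (hLayer S v) fun w => (f (v, w)).2 := by
  intro w hw
  rw [_root_.hLayer, mem_filter] at hw
  obtain ⟨hfS, hadj, hff⟩ := hS _ hw.2
  have hfv : f (v, w) = (v, (f (v, w)).2) :=
    Prod.ext (hS.fst_eq_of_snd_ne hw.2 (hver _ hw.2)) rfl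
  rw [hfv] at hfS hadj hff
  simp only [_root_.hLayer, mem_filter, mem_univ, true_and, hfS, hff]
  exact ⟨boxProd_adj_right.1 hadj, trivial⟩

theorem IsPairing.filter_snd_eq {D : Finset (V × W)} {f : V × W → V × W}
    (hf : IsPairing (G □ H) D f) : IsPairing (G □ H) {d ∈ D | (f d).2 = d.2} f :=
  hf.filter _ fun d hd h => by rw [(hf d hd).2.2, h]

def LayerDominates (G : SimpleGraph V) (D : Finset (V × W)) (cls : V → κ) (e : κ) (w : W) :
    Prop :=
  ∀ v, cls v = e → ∃ u, (u, w) ∈ D ∧ G.Adj u v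

theorem two_mul_card_layerDominates_le [Fintype V] (hG : ∀ v, ∃ u, G.Adj u v)
    {DG : Finset V} {fG : V → V} (hfG : IsPairing G DG fG) (hDG : #DG ≤ pairedDomNum G)
    {dom : V → V} (hdom : ∀ v, dom v ∈ DG ∧ (dom v = v ∨ G.Adj (dom v) v))
    {D : Finset (V × W)} {f : V × W → V × W} (hf : IsPairing (G □ H) D f) (w : W) :
    2 * #{e ∈ DG.image (fun u => s(u, fG u)) |
        LayerDominates G D (fun v => s(dom v, fG (dom v))) e w} ≤
      #(gLayer {d ∈ D | (f d).2 = d.2} w) + 2 * #(gLayer {d ∈ D | (f d).2 ≠ d.2} w) := by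
  set I := DG.image fun u => s(u, fG u)
  set Cov := {e ∈ I | LayerDominates G D (fun v => s(dom v, fG (dom v))) e w}
  set Z := {u ∈ DG | s(u, fG u) ∉ Cov}
  have hZ : IsPairing G Z fG :=
    hfG.filter _ fun u hu h => by rwa [(hfG u hu).2.2, Sym2.eq_swap]
  have hZcard : 2 * #Cov + #Z = #DG := by
    rw [← hfG.card_filter_sym2_mem (filter_subset _ I)]
    exact card_filter_add_card_filter_not _
  have hZdom : IsDomSet G (Z ∪ gLayer {d ∈ D | (f d).2 = d.2} w ∪
      gLayer {d ∈ D | (f d).2 ≠ d.2} w) := by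
    intro v hv
    simp only [mem_union, not_or] at hv
    by_cases hcov : s(dom v, fG (dom v)) ∈ Cov
    · obtain ⟨u, hu, huv⟩ := (mem_filter.1 hcov).2 v rfl
      refine ⟨u, ?_, huv⟩
      by_cases h : (f (u, w)).2 = w <;> simp [_root_.gLayer, hu, h]
    · have hZv : dom v ∈ Z := mem_filter.2 ⟨(hdom v).1, hcov⟩
      refine ⟨dom v, by simp [hZv], (hdom v).2.resolve_left ?_⟩
      rintro h
      exact hv.1.1 (h ▸ hZv)
  have := pairedDomNum_le_card_add_card_add_two_mul_card hG hZ
    (hf.filter_snd_eq.gLayer (fun d hd => (mem_filter.1 hd).2) w) hZdom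
  omega

theorem IsDomSet.image_snd_union_layerDominates [Fintype W] {D : Finset (V × W)}
    (hD : IsDomSet (G □ H) D) (cls : V → κ) (e : κ) :
    IsDomSet H
      ({d ∈ D | cls d.1 = e}.image Prod.snd ∪ ({w | LayerDominates G D cls e w} : Finset W)) := by
  intro w hw
  simp only [mem_union, mem_image, mem_filter, not_or, not_exists, not_and] at hw
  obtain ⟨v, hv, hvw⟩ : ∃ v, cls v = e ∧ ∀ u, (u, w) ∈ D → ¬G.Adj u v := by
    simpa [LayerDominates] using hw.2
  obtain ⟨d, hd, hadj⟩ := hD (v, w) fun h => hw.1 (v, w) ⟨h, hv⟩ rfl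
  rcases boxProd_adj.1 hadj with ⟨hGadj, hdw⟩ | ⟨hHadj, hdv⟩
  · exact absurd hGadj (hvw d.1 (by rw [show w = d.2 from hdw.symm]; exact hd))
  · exact ⟨d.2, mem_union_left _ (mem_image.2 ⟨d, mem_filter.2 ⟨hd, hdv ▸ hv⟩, rfl⟩), hHadj⟩

theorem pairedDomNum_le_of_class [Fintype V] [Fintype W] (hH : ∀ w, ∃ u, H.Adj u w)
    {D : Finset (V × W)} {f : V × W → V × W} (hD : IsDomSet (G □ H) D)
    (hf : IsPairing (G □ H) D f) (cls : V → κ) (e : κ) :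
    pairedDomNum H ≤ #{d ∈ D | (f d).2 ≠ d.2 ∧ cls d.1 = e} +
      2 * (#{d ∈ D | (f d).2 = d.2 ∧ cls d.1 = e} + #{w | LayerDominates G D cls e w}) := by
  set Dv := {d ∈ D | (f d).2 ≠ d.2 ∧ cls d.1 = e}
  set Dh := {d ∈ D | (f d).2 = d.2 ∧ cls d.1 = e}
  have hDv : IsPairing (G □ H) Dv f := hf.filter _ fun d hd ⟨hne, hcls⟩ =>
    ⟨by rw [(hf d hd).2.2]; exact hne.symm, by rwa [hf.fst_eq_of_snd_ne hd hne]⟩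
  have hdom : IsDomSet H (univ.biUnion (hLayer Dv) ∪
      (Dh.image Prod.snd ∪ ({w | LayerDominates G D cls e w} : Finset W))) := by
    refine (hD.image_snd_union_layerDominates cls e).mono fun w hw => ?_
    simp only [mem_union, mem_image, mem_filter, mem_biUnion, mem_univ, true_and, hLayer,
      Dv, Dh] at hw ⊢
    rcases hw with ⟨d, ⟨hd, hcls⟩, rfl⟩ | hw
    · by_cases h : (f d).2 = d.2
      · exact Or.inr (Or.inl ⟨d, ⟨hd, h, hcls⟩, rfl⟩)
      · exact Or.inl ⟨d.1, hd, h, hcls⟩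
    · exact Or.inr (Or.inr hw)
  have := pairedDomNum_le_sum_card_add_two_mul_card hH
    (fun v _ => hDv.hLayer (fun d hd => (mem_filter.1 hd).2.1) v) hdom
  rw [sum_card_hLayer] at this
  have := card_union_le (Dh.image Prod.snd) ({w | LayerDominates G D cls e w} : Finset W)
  have := card_image_le (s := Dh) (f := Prod.snd)
  omega

theorem two_mul_sum_card_layerDominates_le [Fintype V] [Fintype W] (hG : ∀ v, ∃ u, G.Adj u v)
    {DG : Finset V} {fG : V → V} (hfG : IsPairing G DG fG) (hDG : #DG ≤ pairedDomNum G)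
    {dom : V → V} (hdom : ∀ v, dom v ∈ DG ∧ (dom v = v ∨ G.Adj (dom v) v))
    {D : Finset (V × W)} {f : V × W → V × W} (hf : IsPairing (G □ H) D f) :
    2 * ∑ w, #{e ∈ DG.image (fun u => s(u, fG u)) |
        LayerDominates G D (fun v => s(dom v, fG (dom v))) e w} ≤
      #{d ∈ D | (f d).2 = d.2} + 2 * #{d ∈ D | (f d).2 ≠ d.2} := by
  rw [mul_sum, ← sum_card_gLayer, ← sum_card_gLayer, mul_sum, ← sum_add_distrib]
  exact sum_le_sum fun w _ => two_mul_card_layerDominates_le hG hfG hDG hdom hf w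

theorem card_mul_pairedDomNum_le [Fintype V] [Fintype W] (hH : ∀ w, ∃ u, H.Adj u w)
    {D : Finset (V × W)} {f : V × W → V × W} (hD : IsDomSet (G □ H) D)
    (hf : IsPairing (G □ H) D f) {I : Finset κ} {cls : V → κ} (hcls : ∀ v, cls v ∈ I) :
    #I * pairedDomNum H ≤ #{d ∈ D | (f d).2 ≠ d.2} +
      2 * (#{d ∈ D | (f d).2 = d.2} + ∑ e ∈ I, #{w | LayerDominates G D cls e w}) := by
  have hfiber (p : V × W → Prop) [DecidablePred p] :
      #{d ∈ D | p d} = ∑ e ∈ I, #{d ∈ D | p d ∧ cls d.1 = e} := by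
    rw [card_eq_sum_card_fiberwise (f := fun d : V × W => cls d.1) (t := I) fun d _ => hcls d.1]
    simp only [filter_filter]
  rw [hfiber fun d => (f d).2 = d.2, hfiber fun d => (f d).2 ≠ d.2, ← sum_add_distrib, mul_sum,
    ← sum_add_distrib, ← smul_eq_mul, ← sum_const]
  exact sum_le_sum fun e _ => pairedDomNum_le_of_class hH hD hf cls e

end BoxProd

/-- `γ_pr(G)·γ_pr(H) ≤ 6·γ_pr(G □ H)` for graphs without isolated vertices. -/
theorem pairedDomNum_mul_pairedDomNum_le_six_mul_pairedDomNum_boxProd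
    {V W : Type*} [Fintype V] [Fintype W]
    (G : SimpleGraph V) (H : SimpleGraph W)
    (hG : ∀ v : V, ∃ u : V, G.Adj u v) (hH : ∀ w : W, ∃ u : W, H.Adj u w) :
    pairedDomNum G * pairedDomNum H ≤ 6 * pairedDomNum (G □ H) := by
  classical
  obtain ⟨DG, hDG, hDGcard⟩ := exists_isPairedDomSet_card_eq_pairedDomNum hG
  obtain ⟨D, hD, hDcard⟩ := exists_isPairedDomSet_card_eq_pairedDomNum (G := G □ H)
    fun x => let ⟨u, hu⟩ := hG x.1; ⟨(u, x.2), boxProd_adj_left.2 hu⟩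
  obtain ⟨hDGdom, fG, hfG⟩ := isPairedDomSet_iff.1 hDG
  obtain ⟨hDdom, f, hf⟩ := isPairedDomSet_iff.1 hD
  choose dom hdom using hDGdom.exists_mem_eq_or_adj
  set I := DG.image fun u => s(u, fG u)
  set cls := fun v => s(dom v, fG (dom v))
  have hlayers := two_mul_sum_card_layerDominates_le hG hfG hDGcard.le hdom hf
  have hclasses := card_mul_pairedDomNum_le hH hDdom hf (I := I) (cls := cls)
    fun v => mem_image_of_mem _ (hdom v).1
  have hdouble := sum_card_bipartiteAbove_eq_sum_card_bipartiteBelow (s := I) (t := univ)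
    (r := fun e w => LayerDominates G D cls e w)
  have hI : #DG = 2 * #I := by
    rw [← hfG.card_filter_sym2_mem subset_rfl,
      filter_true_of_mem fun u hu => mem_image_of_mem _ hu]
  have hsplit := card_filter_add_card_filter_not (s := D) fun d => (f d).2 = d.2
  rw [← hDGcard, ← hDcard, hI]
  simp only [bipartiteAbove, bipartiteBelow] at hdouble
  nlinarith
end
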